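/- For c ≥ 1, the Marchenko–Pastur density ρ(λ) = (1/(2πλ))·√((λ₊-λ)(λ-λ₋)) on the interval σ = (λ₋, λ₊), with λ± = (1±√c)², extended by 0 outside σ, is a probability density: ∫_{λ₋}^{λ₊} ρ(λ) dλ = 1. -/

import Mathlib

open Real MeasureTheory

noncomputable def mpF (a b : ℝ) (x : ℝ) : ℝ :=
  Real.sqrt ((b - x) * (x - a)) + (a + b) / 2 * Real.arcsin ((2 * x - a - b) / (b - a))
    - Real.sqrt (a * b) * Real.arcsin (((a + b) * x - 2 * (a * b)) / ((b - a) * x))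

lemma mp_deriv {a b : ℝ} (ha : 0 ≤ a) (hab : a < b) {x : ℝ} (hx : x ∈ Set.Ioo a b) :
    HasDerivAt (mpF a b) (Real.sqrt ((b - x) * (x - a)) / x) x := by
  obtain ⟨hxa, hxb⟩ := hx
  have hx0 : 0 < x := lt_of_le_of_lt ha hxa
  have hba : (0:ℝ) < b - a := sub_pos.2 hab
  have hR : 0 < (b - x) * (x - a) := mul_pos (sub_pos.2 hxb) (sub_pos.2 hxa)
  set S := Real.sqrt ((b - x) * (x - a)) with hSdef
  have hS : 0 < S := Real.sqrt_pos.2 hR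
  have hS2 : S ^ 2 = (b - x) * (x - a) := Real.sq_sqrt hR.le
  -- term 1
  have d1 : HasDerivAt (fun y => Real.sqrt ((b - y) * (y - a))) ((a + b - 2*x) / (2 * S)) x := by
    have h1 : HasDerivAt (fun y => (b - y) * (y - a)) (a + b - 2*x) x := by
      have := (((hasDerivAt_id x).const_sub b).mul ((hasDerivAt_id x).sub_const a))
      refine this.congr_deriv ?_
      simp; ring
    have := h1.sqrt hR.ne'
    convert this using 1
  -- term 2
  have hv1 : (2 * x - a - b) / (b - a) ≠ -1 := by
    intro h
    rw [div_eq_iff hba.ne'] at h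
    nlinarith
  have hv2 : (2 * x - a - b) / (b - a) ≠ 1 := by
    intro h
    rw [div_eq_iff hba.ne'] at h
    nlinarith
  have hsv : Real.sqrt (1 - ((2 * x - a - b) / (b - a)) ^ 2) = 2 * S / (b - a) := by
    rw [show 1 - ((2 * x - a - b) / (b - a)) ^ 2 = (2 * S / (b - a)) ^ 2 by
      rw [div_pow, div_pow, mul_pow, hS2]; field_simp; ring]
    exact Real.sqrt_sq (by positivity)
  have d2 : HasDerivAt (fun y => (a + b) / 2 * Real.arcsin ((2 * y - a - b) / (b - a)))
      ((a + b) / (2 * S)) x := by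
    have hv : HasDerivAt (fun y => (2 * y - a - b) / (b - a)) (2 / (b - a)) x := by
      have := ((((hasDerivAt_id x).const_mul 2).sub_const a).sub_const b).div_const (b - a)
      refine this.congr_deriv ?_
      · ring
    have harc := (Real.hasDerivAt_arcsin hv1 hv2).comp x hv
    have := harc.const_mul ((a + b) / 2)
    refine this.congr_deriv ?_
    rw [hsv]
    field_simp
  -- term 3
  have d3 : HasDerivAt (fun y => Real.sqrt (a * b)
        * Real.arcsin (((a + b) * y - 2 * (a * b)) / ((b - a) * y)))
      (a * b / (x * S)) x := by
    rcases eq_or_lt_of_le ha with h0 | h0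
    · have : (fun y : ℝ => Real.sqrt (a * b)
          * Real.arcsin (((a + b) * y - 2 * (a * b)) / ((b - a) * y))) = fun _ => 0 := by
        funext y; rw [← h0]; simp
      rw [this, ← h0]
      simpa using hasDerivAt_const x (0:ℝ)
    · have hax : 0 < a * b := mul_pos h0 (lt_trans h0 hab)
      set q := Real.sqrt (a * b) with hqdef
      have hsab : 0 < q := Real.sqrt_pos.2 hax
      have hq2 : q ^ 2 = a * b := Real.sq_sqrt hax.le
      have hden : (b - a) * x ≠ 0 := mul_ne_zero hba.ne' hx0.ne'
      have hu1 : ((a + b) * x - 2 * (a * b)) / ((b - a) * x) ≠ -1 := by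
        intro h
        rw [div_eq_iff hden] at h
        nlinarith
      have hu2 : ((a + b) * x - 2 * (a * b)) / ((b - a) * x) ≠ 1 := by
        intro h
        rw [div_eq_iff hden] at h
        nlinarith
      have hsu : Real.sqrt (1 - (((a + b) * x - 2 * (a * b)) / ((b - a) * x)) ^ 2)
          = 2 * q * S / ((b - a) * x) := by
        rw [show 1 - (((a + b) * x - 2 * (a * b)) / ((b - a) * x)) ^ 2
            = (2 * q * S / ((b - a) * x)) ^ 2 by
          rw [div_pow, div_pow]
          rw [show (2 * q * S) ^ 2 = 4 * (a * b) * ((b - x) * (x - a)) by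
            rw [mul_pow, mul_pow, hq2, hS2]; ring]
          field_simp
          ring]
        exact Real.sqrt_sq (by positivity)
      have hu : HasDerivAt (fun y => ((a + b) * y - 2 * (a * b)) / ((b - a) * y))
          (2 * (a * b) / ((b - a) * x ^ 2)) x := by
        have hnum : HasDerivAt (fun y => (a + b) * y - 2 * (a * b)) (a + b) x := by
          simpa using ((hasDerivAt_id x).const_mul (a + b)).sub_const (2 * (a * b))
        have hd : HasDerivAt (fun y => (b - a) * y) (b - a) x := by
          simpa using (hasDerivAt_id x).const_mul (b - a)
        have := hnum.div hd hden
        refine this.congr_deriv ?_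
        field_simp
        ring
      have harc := (Real.hasDerivAt_arcsin hu1 hu2).comp x hu
      have := harc.const_mul q
      refine this.congr_deriv ?_
      rw [hsu]
      field_simp
  have := (d1.add d2).sub d3
  refine this.congr_deriv ?_
  rw [div_add_div _ _ (by positivity) (by positivity), div_sub_div _ _ (by positivity)
    (by positivity)]
  rw [div_eq_div_iff (by positivity) (by positivity)]
  linear_combination (-(4 * x * S ^ 2)) * hS2

lemma mp_cont {a b : ℝ} (ha : 0 ≤ a) (hab : a < b) :
    ContinuousOn (fun x => Real.sqrt ((b - x) * (x - a))
      + (a + b) / 2 * Real.arcsin ((2 * x - a - b) / (b - a))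
      - Real.sqrt (a * b) * Real.arcsin (((a + b) * x - 2 * (a * b)) / ((b - a) * x)))
      (Set.Icc a b) := by
  have hba : (0:ℝ) < b - a := sub_pos.2 hab
  apply ContinuousOn.sub
  · apply ContinuousOn.add
    · exact (Real.continuous_sqrt.comp (by continuity)).continuousOn
    · exact (continuous_const.mul (Real.continuous_arcsin.comp (by continuity))).continuousOn
  · rcases eq_or_lt_of_le ha with h0 | h0
    · have : (fun x : ℝ => Real.sqrt (a * b)
          * Real.arcsin (((a + b) * x - 2 * (a * b)) / ((b - a) * x))) = fun _ => 0 := by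
        funext y; rw [← h0]; simp
      rw [this]
      exact continuousOn_const
    · apply ContinuousOn.mul continuousOn_const
      apply Real.continuous_arcsin.comp_continuousOn
      apply ContinuousOn.div (by fun_prop) (by fun_prop)
      intro y hy
      exact mul_ne_zero hba.ne' (ne_of_gt (lt_of_lt_of_le h0 hy.1))

lemma mp_int {a b : ℝ} (ha : 0 ≤ a) (hab : a < b) :
    IntervalIntegrable (fun x => Real.sqrt ((b - x) * (x - a)) / x) volume a b := by
  have hb : 0 < b := lt_of_le_of_lt ha hab
  have hg : IntervalIntegrable (fun x => Real.sqrt b * x ^ (-(1/2) : ℝ)) volume a b :=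
    (intervalIntegral.intervalIntegrable_rpow' (by norm_num)).const_mul _
  apply hg.mono_fun
  · apply Measurable.aestronglyMeasurable
    fun_prop
  · rw [Filter.EventuallyLE, ae_restrict_iff' measurableSet_uIoc]
    filter_upwards with x hx
    rw [Set.uIoc_of_le hab.le] at hx
    obtain ⟨hxa, hxb⟩ := hx
    have hx0 : 0 < x := lt_of_le_of_lt ha hxa
    have h1 : ‖Real.sqrt ((b - x) * (x - a)) / x‖ = Real.sqrt ((b - x) * (x - a)) / x := by
      rw [Real.norm_eq_abs, abs_of_nonneg (by positivity)]
    have h2 : ‖Real.sqrt b * x ^ (-(1/2) : ℝ)‖ = Real.sqrt b * x ^ (-(1/2) : ℝ) := by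
      rw [Real.norm_eq_abs, abs_of_nonneg (by positivity)]
    rw [h1, h2]
    have hxr : x ^ (-(1/2) : ℝ) = 1 / Real.sqrt x := by
      rw [Real.rpow_neg hx0.le, Real.sqrt_eq_rpow]
      exact (one_div _).symm
    have hxx : Real.sqrt x / x = 1 / Real.sqrt x := by
      rw [div_eq_div_iff hx0.ne' (Real.sqrt_pos.2 hx0).ne', Real.mul_self_sqrt hx0.le, one_mul]
    rw [hxr]
    have key : Real.sqrt ((b - x) * (x - a)) ≤ Real.sqrt (b * x) := by
      apply Real.sqrt_le_sqrt
      have h3 : b - x ≤ b := by linarith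
      have h4 : x - a ≤ x := by linarith
      nlinarith [sub_nonneg.2 hxb, sub_nonneg.2 hxa.le]
    calc Real.sqrt ((b - x) * (x - a)) / x ≤ Real.sqrt (b * x) / x := by gcongr
      _ = Real.sqrt b * Real.sqrt x / x := by rw [Real.sqrt_mul hb.le]
      _ = Real.sqrt b * (1 / Real.sqrt x) := by rw [mul_div_assoc, hxx]

lemma mp_key {a b : ℝ} (ha : 0 ≤ a) (hab : a < b) :
    ∫ x in a..b, Real.sqrt ((b - x) * (x - a)) / x
      = π * ((a + b) / 2 - Real.sqrt (a * b)) := by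
  have hb : 0 < b := lt_of_le_of_lt ha hab
  have hba : (0:ℝ) < b - a := sub_pos.2 hab
  rw [intervalIntegral.integral_eq_sub_of_hasDerivAt_of_le hab.le (mp_cont ha hab)
    (fun x hx => mp_deriv ha hab hx) (mp_int ha hab)]
  show mpF a b b - mpF a b a = _
  unfold mpF
  have e1 : Real.sqrt ((b - b) * (b - a)) = 0 := by simp
  have e2 : Real.sqrt ((b - a) * (a - a)) = 0 := by simp
  have h1 : (2 * b - a - b) / (b - a) = 1 := by
    rw [show 2 * b - a - b = b - a by ring, div_self hba.ne']
  have h2 : (2 * a - a - b) / (b - a) = -1 := by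
    rw [show 2 * a - a - b = -(b - a) by ring, neg_div, div_self hba.ne']
  have h3 : ((a + b) * b - 2 * (a * b)) / ((b - a) * b) = 1 := by
    rw [show (a + b) * b - 2 * (a * b) = (b - a) * b by ring,
      div_self (mul_ne_zero hba.ne' hb.ne')]
  rw [e1, e2, h1, h2, h3, Real.arcsin_one, Real.arcsin_neg_one]
  rcases eq_or_lt_of_le ha with h0 | h0
  · rw [← h0]
    simp
    ring
  · have h4 : ((a + b) * a - 2 * (a * b)) / ((b - a) * a) = -1 := by
      rw [show (a + b) * a - 2 * (a * b) = -((b - a) * a) by ring, neg_div,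
        div_self (mul_ne_zero hba.ne' h0.ne')]
    rw [h4, Real.arcsin_neg_one]
    ring

/-- The Marchenko–Pastur density integrates to 1. -/
theorem marchenko_pastur_density_integrates_to_one (c : ℝ) (hc : 1 ≤ c) :
    ∫ l in ((1 - Real.sqrt c) ^ 2)..((1 + Real.sqrt c) ^ 2),
      (1 / (2 * π * l)) *
        Real.sqrt (((1 + Real.sqrt c) ^ 2 - l) * (l - (1 - Real.sqrt c) ^ 2)) = 1 := by
  have hsc : 1 ≤ Real.sqrt c := by
    rw [show (1:ℝ) = Real.sqrt 1 by simp]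
    exact Real.sqrt_le_sqrt hc
  set a := (1 - Real.sqrt c) ^ 2 with hadef
  set b := (1 + Real.sqrt c) ^ 2 with hbdef
  have ha : 0 ≤ a := sq_nonneg _
  have hab : a < b := by
    have : (0:ℝ) < Real.sqrt c := lt_of_lt_of_le one_pos hsc
    nlinarith [sq_nonneg (1 - Real.sqrt c), sq_nonneg (1 + Real.sqrt c)]
  have hsq : Real.sqrt c ^ 2 = c := Real.sq_sqrt (le_trans zero_le_one hc)
  have hab2 : a * b = (c - 1) ^ 2 := by
    rw [hadef, hbdef]; nlinarith [hsq]
  have hsab : Real.sqrt (a * b) = c - 1 := by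
    rw [hab2, Real.sqrt_sq (by linarith)]
  have hsum : a + b = 2 * (1 + c) := by rw [hadef, hbdef]; nlinarith [hsq]
  have key := mp_key ha hab
  have hrw : ∀ l : ℝ, (1 / (2 * π * l)) * Real.sqrt ((b - l) * (l - a))
      = (1 / (2 * π)) * (Real.sqrt ((b - l) * (l - a)) / l) := by
    intro l
    rcases eq_or_ne l 0 with h | h
    · simp [h]
    · field_simp
  simp_rw [hrw]
  rw [intervalIntegral.integral_const_mul, key, hsab, hsum]
  have hπ : π ≠ 0 := Real.pi_ne_zero
  field_simp
  ring
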